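/- arXiv:1907.06489 — 4 statements merged into one kernel-verified Lean document; each statement's English description precedes it below -/
import Mathlib

section
/- For integers t0, t1 with t0 ≤ -1 and t1 ≥ 2, the rational number (t0 - 1 - 1/t1) has continued fraction expansion [t0 - 2, -2, -2, ..., -2] with t1 - 1 trailing entries equal to -2, and consequently the product |(r_0+1)···(r_{k-1}+1) r_k| computed from this expansion equals 2|t0 - 1|. -/
/-- The continued fraction `[r₀,...,r_k] = r₀ - 1/(r₁ - 1/(⋯ - 1/r_k))`. -/
def cf : List ℚ → ℚ
  | [] => 0
  | [r] => r
  | r :: s :: rest => r - 1 / cf (s :: rest)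

/-- `N = |(r₀+1)(r₁+1)⋯(r_{k-1}+1) · r_k|` for the expansion `[r₀,...,r_k]`. -/
def cfN (l : List ℚ) : ℚ := |((l.dropLast).map (· + 1)).prod * l.getLastD 0|

lemma cf_cons_replicate_succ (x a : ℚ) (n : ℕ) :
    cf (x :: List.replicate (n + 1) a) = x - 1 / cf (List.replicate (n + 1) a) := rfl

lemma cf_replicate_succ_neg_two (n : ℕ) :
    cf (List.replicate (n + 1) (-2 : ℚ)) = -((n + 2) / (n + 1)) := by
  induction n with
  | zero => norm_num [cf]
  | succ n ih =>
    rw [List.replicate_succ, cf_cons_replicate_succ, ih]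
    push_cast
    field_simp
    ring

lemma cf_cons_replicate_succ_neg_two (x : ℚ) (n : ℕ) :
    cf (x :: List.replicate (n + 1) (-2 : ℚ)) = x + (n + 1) / (n + 2) := by
  rw [cf_cons_replicate_succ, cf_replicate_succ_neg_two, one_div_neg_eq_neg_one_div, one_div_div,
    sub_neg_eq_add]

lemma cfN_concat (l : List ℚ) (r : ℚ) :
    cfN (l ++ [r]) = |(l.map (· + 1)).prod * r| := by
  rw [cfN, List.dropLast_concat, List.getLastD_eq_getLast?, List.getLast?_concat, Option.getD_some]

lemma cfN_cons_replicate_succ_neg_two (x : ℚ) (n : ℕ) :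
    cfN (x :: List.replicate (n + 1) (-2 : ℚ)) = 2 * |x + 1| := by
  rw [List.replicate_succ', ← List.cons_append, cfN_concat]
  simp only [List.map_cons, List.map_replicate, List.prod_cons, List.prod_replicate]
  norm_num [abs_mul]
  ring

theorem cf_case_b1_general (t0 t1 : ℤ) (h1 : 2 ≤ t1) :
    cf (((t0 : ℚ) - 2) :: List.replicate (t1 - 1).toNat (-2))
        = (t0 : ℚ) - 1 - 1 / (t1 : ℚ) ∧
      cfN (((t0 : ℚ) - 2) :: List.replicate (t1 - 1).toNat (-2))
        = 2 * |(t0 : ℚ) - 1| := by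
  obtain ⟨n, hn, rfl⟩ : ∃ n : ℕ, (t1 - 1).toNat = n + 1 ∧ t1 = n + 2 :=
    ⟨(t1 - 2).toNat, by omega, by omega⟩
  rw [hn, cf_cons_replicate_succ_neg_two, cfN_cons_replicate_succ_neg_two]
  push_cast
  constructor
  · field_simp
    ring
  · ring_nf

theorem cf_case_b1 (t0 t1 : ℤ) (h0 : t0 ≤ -1) (h1 : 2 ≤ t1) :
    cf (((t0 : ℚ) - 2) :: List.replicate (t1 - 1).toNat (-2))
        = (t0 : ℚ) - 1 - 1 / (t1 : ℚ) ∧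
      cfN (((t0 : ℚ) - 2) :: List.replicate (t1 - 1).toNat (-2))
        = 2 * |(t0 : ℚ) - 1| :=
  cf_case_b1_general t0 t1 h1
end

section
/- For all integers t0 ≥ t1 ≥ 3, the rational number (-2 - t1 + 2·t0·t1)/(1 + t1 - t0·t1) has continued fraction expansion [-3, -2,...,-2, -3, -2,...,-2] with t0 - 3 entries -2 after the first -3 and t1 - 2 entries -2 after the second -3, and the associated product |(-3+1)·(-2+1)^{t0-3}·(-3+1)·(-2+1)^{t1-3}·(-2)| equals 8. -/
/-!
Write the value of a tail of the expansion as `-P/Q`. Prepending an entry `a` gives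
`(a P + Q)/P`; for `a = -2` this is `-(2P - Q)/P`, which keeps the difference `P - Q` fixed.
Hence a block of `k` entries `-2` acts by `(P, Q) ↦ (P + k(P - Q), Q + k(P - Q))`, and the
expansion is evaluated by three such updates. For `N`, every entry `-2` contributes a factor
`-1`, so only the two entries `-3` and the final `-2` count: `|(-2)(-2)(-2)| = 8`.
-/

lemma cf_cons {l : List ℚ} (hl : l ≠ []) (a : ℚ) : cf (a :: l) = a - 1 / cf l := by
  cases l with
  | nil => exact absurd rfl hl
  | cons b t => rfl

lemma cf_cons_of_eq_neg_div {l : List ℚ} (hl : l ≠ []) {P Q : ℚ} (hP : P ≠ 0)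
    (h : cf l = -P / Q) (a : ℚ) : cf (a :: l) = (a * P + Q) / P := by
  rw [cf_cons hl, h]
  field_simp
  ring

lemma cf_replicate_neg_two_append (k : ℕ) {l : List ℚ} (hl : l ≠ []) {P Q : ℚ}
    (hQ : 0 < Q) (hQP : Q ≤ P) (h : cf l = -P / Q) :
    cf (List.replicate k (-2) ++ l) = -(P + k * (P - Q)) / (Q + k * (P - Q)) := by
  induction k with
  | zero => simpa using h
  | succ k ih =>
    have hne : List.replicate k (-2 : ℚ) ++ l ≠ [] := by simp [hl]
    have hpos : 0 < P + k * (P - Q) := by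
      have : 0 ≤ (k : ℚ) * (P - Q) := mul_nonneg k.cast_nonneg (sub_nonneg.2 hQP)
      linarith
    rw [List.replicate_succ, List.cons_append, cf_cons_of_eq_neg_div hne hpos.ne' ih]
    push_cast
    ring

lemma cf_neg_three_replicate_neg_three_replicate (k n : ℕ) :
    cf ((-3) :: (List.replicate k (-2) ++ (-3) :: List.replicate (n + 1) (-2))) =
      -(5 * n + 13 + 2 * k * (n + 3)) / (2 * n + 5 + k * (n + 3)) := by
  have tail : cf (List.replicate (n + 1) (-2)) = -(n + 2) / (n + 1) := by
    rw [List.replicate_succ', cf_replicate_neg_two_append n (by simp) one_pos one_le_two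
      (by norm_num [cf])]
    ring
  have second : cf ((-3) :: List.replicate (n + 1) (-2)) = -(2 * n + 5) / (n + 2) := by
    rw [cf_cons_of_eq_neg_div (by simp) (by positivity) tail]
    ring
  have middle : cf (List.replicate k (-2) ++ (-3) :: List.replicate (n + 1) (-2)) =
      -(2 * n + 5 + k * (n + 3)) / (n + 2 + k * (n + 3)) := by
    rw [cf_replicate_neg_two_append k (by simp) (by positivity) (by linarith) second]
    ring
  rw [cf_cons_of_eq_neg_div (by simp) (by positivity) middle]
  ring

lemma cfN_append_singleton (l : List ℚ) (x : ℚ) :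
    cfN (l ++ [x]) = |(l.map (· + 1)).prod * x| := by
  simp [cfN]

lemma cfN_neg_three_replicate_neg_three_replicate (k n : ℕ) :
    cfN ((-3) :: (List.replicate k (-2) ++ (-3) :: List.replicate (n + 1) (-2))) = 8 := by
  have split : (-3 : ℚ) :: (List.replicate k (-2) ++ (-3) :: List.replicate (n + 1) (-2)) =
      (-3) :: (List.replicate k (-2) ++ (-3) :: List.replicate n (-2)) ++ [-2] := by
    simp [List.replicate_succ']
  rw [split, cfN_append_singleton]
  simp only [List.map_cons, List.map_append, List.map_replicate, List.prod_cons,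
    List.prod_append, List.prod_replicate]
  norm_num [abs_mul, abs_pow]

theorem cf_case_c4 (t0 t1 : ℤ) (h1 : 3 ≤ t1) (h0 : t1 ≤ t0) :
    cf ((-3 : ℚ) :: (List.replicate (t0 - 3).toNat (-2) ++
          (-3 : ℚ) :: List.replicate (t1 - 2).toNat (-2)))
        = ((-2 : ℚ) - t1 + 2 * t0 * t1) / (1 + t1 - t0 * t1) ∧
      cfN ((-3 : ℚ) :: (List.replicate (t0 - 3).toNat (-2) ++
          (-3 : ℚ) :: List.replicate (t1 - 2).toNat (-2))) = 8 := by
  obtain ⟨n, hn⟩ : ∃ n : ℕ, (t1 - 2).toNat = n + 1 := ⟨(t1 - 2).toNat - 1, by omega⟩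
  have hk : ((t0 - 3).toNat : ℚ) = t0 - 3 := by
    exact_mod_cast Int.toNat_of_nonneg (by omega : 0 ≤ t0 - 3)
  have hn' : (n : ℚ) = t1 - 3 := by
    have : (n : ℤ) = t1 - 3 := by omega
    exact_mod_cast this
  rw [hn]
  refine ⟨?_, cfN_neg_three_replicate_neg_three_replicate _ n⟩
  rw [cf_neg_three_replicate_neg_three_replicate, hk, hn', neg_div, ← div_neg]
  congr 1 <;> ring
end

section
/- For integers t0 ≥ 4, the rational number (-3 + 2·t0)/(2 - t0) equals the continued fraction [-3, -2,...,-2] with t0 - 3 trailing entries -2, and the associated product N = |(-3+1)·(-2+1)^{t0-4}·(-2)| equals 4. -/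
theorem cf_replicate_neg_two (n : ℕ) :
    cf (List.replicate (n + 1) (-2)) = -((n : ℚ) + 2) / ((n : ℚ) + 1) := by
  induction n with
  | zero => norm_num [cf]
  | succ k ih =>
    rw [List.replicate_succ, List.replicate_succ, cf, ← List.replicate_succ, ih]
    have hk : (k : ℚ) + 2 ≠ 0 := by positivity
    push_cast
    field_simp
    ring

theorem cf_neg_three_cons_replicate_neg_two (n : ℕ) :
    cf (-3 :: List.replicate (n + 1) (-2)) = -(2 * (n : ℚ) + 5) / ((n : ℚ) + 2) := by
  rw [List.replicate_succ, cf, ← List.replicate_succ, cf_replicate_neg_two]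
  have hn : (n : ℚ) + 2 ≠ 0 := by positivity
  field_simp
  ring

theorem cfN_cons_replicate (a b : ℚ) (n : ℕ) :
    cfN (a :: List.replicate (n + 1) b) = |(a + 1) * (b + 1) ^ n * b| := by
  rw [cfN, List.replicate_succ', ← List.cons_append, List.dropLast_concat,
    List.getLastD_concat, List.map_cons, List.prod_cons, List.map_replicate,
    List.prod_replicate]

theorem cf_case_c3 (t0 : ℤ) (h0 : 4 ≤ t0) :
    cf ((-3 : ℚ) :: List.replicate (t0 - 3).toNat (-2))
        = ((-3 : ℚ) + 2 * t0) / (2 - t0) ∧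
      cfN ((-3 : ℚ) :: List.replicate (t0 - 3).toNat (-2)) = 4 := by
  obtain ⟨n, rfl⟩ : ∃ n : ℕ, t0 = n + 4 := ⟨(t0 - 4).toNat, by omega⟩
  have hlen : ((n : ℤ) + 4 - 3).toNat = n + 1 := by omega
  rw [hlen, cf_neg_three_cons_replicate_neg_two, cfN_cons_replicate]
  constructor
  · push_cast
    rw [show (2 : ℚ) - (n + 4) = -(n + 2) by ring, div_neg, neg_div]
    ring
  · norm_num [abs_mul, abs_pow]
end

section
/- Let M⁽ⁿ⁾ be the (n+1)×(n+1) tridiagonal matrix with M₀₀ = -1, Mᵢᵢ = -2 for 1 ≤ i ≤ n, and sub/superdiagonal entries -1. Let M₀⁽ⁿ⁾ be the (n+2)×(n+2) matrix obtained from M⁽ⁿ⁾ by adding a new first row and column that are zero except for entries -1 in the position pairing the new index with the last original index (and 0 in the new diagonal entry). Then det M₀⁽ⁿ⁾ = (-1)^{n+1}. -/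
/-- The `(n+1)×(n+1)` tridiagonal matrix with first diagonal entry `-1`,
other diagonal entries `-2`, and `-1` on the sub- and superdiagonal. -/
def Mtri (n : ℕ) : Matrix (Fin (n + 1)) (Fin (n + 1)) ℤ := fun i j =>
  if i = j then (if (i : ℕ) = 0 then -1 else -2)
  else if (i : ℕ) + 1 = j ∨ (j : ℕ) + 1 = i then -1 else 0

/-- The `(n+2)×(n+2)` extended linking matrix: a new first row and column which are
zero except for entries `-1` pairing the new index `0` with the last original index
`n+1` (and `0` in the new diagonal entry), with `Mtri n` as the remaining block. -/
def Mext (n : ℕ) : Matrix (Fin (n + 2)) (Fin (n + 2)) ℤ := fun i j =>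
  if (i : ℕ) = 0 then (if (j : ℕ) = n + 1 then -1 else 0)
  else if (j : ℕ) = 0 then (if (i : ℕ) = n + 1 then -1 else 0)
  else
    Mtri n ⟨(i : ℕ) - 1, by have := i.is_lt; omega⟩
      ⟨(j : ℕ) - 1, by have := j.is_lt; omega⟩

open Matrix Finset

lemma sum_if_unique (n m : ℕ) (hm : m < n) (P : ℕ → Prop) [DecidablePred P]
    (h : ∀ k < n, P k → k = m) :
    (∑ k : Fin n, if P (k : ℕ) then (1 : ℤ) else 0) = if P m then 1 else 0 := by
  rw [Fin.sum_univ_eq_sum_range (fun k => if P k then (1:ℤ) else 0)]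
  apply Finset.sum_eq_single_of_mem m (Finset.mem_range.2 hm)
  intro b hb hbm
  rw [if_neg]
  intro hPb
  exact hbm (h b (Finset.mem_range.1 hb) hPb)

def Ltri (n : ℕ) : Matrix (Fin n) (Fin n) ℤ := fun i j =>
  if (i : ℕ) = j ∨ (j : ℕ) + 1 = i then 1 else 0

def Dmat (n : ℕ) : Matrix (Fin n) (Fin n) ℤ := fun i j =>
  if i = j then (if (i : ℕ) = 0 then -1 else -2)
  else if (i : ℕ) + 1 = j ∨ (j : ℕ) + 1 = i then -1 else 0

lemma Dmat_eq (n : ℕ) : Dmat n = (-(Ltri n)) * (Ltri n)ᵀ := by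
  ext i j
  simp only [Dmat, Matrix.mul_apply, Matrix.neg_apply, Matrix.transpose_apply, Ltri]
  rw [Finset.sum_congr rfl (g := fun k : Fin n =>
    -(((if ((k:ℕ) = i ∧ (k:ℕ) = j) then (1:ℤ) else 0) +
       (if ((k:ℕ) = i ∧ (k:ℕ)+1 = j) then (1:ℤ) else 0)) +
      ((if ((k:ℕ)+1 = i ∧ (k:ℕ) = j) then (1:ℤ) else 0) +
       (if ((k:ℕ)+1 = i ∧ (k:ℕ)+1 = j) then (1:ℤ) else 0))))]
  · simp only [neg_add, Finset.sum_add_distrib, Finset.sum_neg_distrib]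
    rw [sum_if_unique n i i.is_lt (fun k => k = (i:ℕ) ∧ k = (j:ℕ))
          (fun k _ hP => hP.1),
        sum_if_unique n i i.is_lt (fun k => k = (i:ℕ) ∧ k + 1 = (j:ℕ))
          (fun k _ hP => hP.1),
        sum_if_unique n j j.is_lt (fun k => k + 1 = (i:ℕ) ∧ k = (j:ℕ))
          (fun k _ hP => hP.2),
        sum_if_unique n ((i:ℕ) - 1) (by have := i.is_lt; omega)
          (fun k => k + 1 = (i:ℕ) ∧ k + 1 = (j:ℕ)) (fun k _ hP => by omega)]
    simp only [Fin.ext_iff]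
    split_ifs <;> (try simp only [true_and, and_true] at *) <;> omega
  · intro k _
    split_ifs <;> omega

lemma det_Ltri (n : ℕ) : (Ltri n).det = 1 := by
  rw [Matrix.det_of_lowerTriangular]
  · simp [Ltri]
  · intro i j h
    have h' : (i : ℕ) < (j : ℕ) := h
    simp only [Ltri, ite_eq_right_iff]
    intro hc; omega

lemma det_Dmat (n : ℕ) : (Dmat n).det = (-1) ^ n := by
  rw [Dmat_eq, Matrix.det_mul, Matrix.det_neg, Matrix.det_transpose, det_Ltri]
  simp

theorem det_Mext (n : ℕ) (hn : 1 ≤ n) : (Mext n).det = (-1) ^ (n + 1) := by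
  set C : Matrix (Fin (n + 1)) (Fin (n + 1)) ℤ :=
    (Mext n).submatrix Fin.castSucc Fin.succ with hC
  -- the inner block is Dmat n
  have hD : C.submatrix Fin.succ Fin.castSucc = Dmat n := by
    ext i j
    simp only [hC, Matrix.submatrix_apply, Mext, Mtri, Dmat,
      Fin.coe_castSucc, Fin.val_succ]
    split_ifs <;> simp_all [Fin.ext_iff] <;> omega
  -- expansion of det C along its first row
  have hCdet : C.det = (-1) ^ n * (-1) * (Dmat n).det := by
    rw [Matrix.det_succ_row_zero]
    rw [Finset.sum_eq_single (Fin.last n)]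
    · rw [Fin.succAbove_last, hD]
      have h0 : C 0 (Fin.last n) = -1 := by
        simp [hC, Mext, Fin.last]
      rw [h0, Fin.val_last]
    · intro b _ hb
      have hb' : (b : ℕ) ≠ n := fun h => hb (Fin.ext h)
      have h0 : C 0 b = 0 := by
        simp only [hC, Matrix.submatrix_apply, Mext, Fin.coe_castSucc,
          Fin.val_zero, Fin.val_succ]
        split_ifs <;> first | rfl | omega | contradiction
      rw [h0, mul_zero, zero_mul]
    · intro h; exact absurd (Finset.mem_univ _) h
  -- expansion of det (Mext n) along its first column
  rw [Matrix.det_succ_column_zero]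
  rw [Finset.sum_eq_single (Fin.last (n + 1))]
  · rw [Fin.succAbove_last, ← hC, hCdet, det_Dmat]
    have h0 : Mext n (Fin.last (n + 1)) 0 = -1 := by
      simp [Mext, Fin.last]
    rw [h0, Fin.val_last]
    have h2 : (-1 : ℤ) ^ n * (-1) ^ n = 1 := by
      rw [← pow_add]; exact Even.neg_one_pow ⟨n, by ring⟩
    rw [show ((-1:ℤ) ^ n * -1 * (-1) ^ n) = -1 * ((-1) ^ n * (-1) ^ n) from by ring,
      h2]
    ring
  · intro b _ hb
    have hb' : (b : ℕ) ≠ n + 1 := fun h => hb (Fin.ext h)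
    have h0 : Mext n b 0 = 0 := by
      simp only [Mext, Fin.val_zero]
      split_ifs <;> first | rfl | omega | contradiction
    rw [h0, mul_zero, zero_mul]
  · intro h; exact absurd (Finset.mem_univ _) h
end
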